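/- arXiv:0705.1375 — 3 statements merged into one kernel-verified Lean document; each statement's English description precedes it below -/
import Mathlib

section
/- Define ⟨p,q⟩ for 0 ≤ p ≤ q by the double sum ⟨p,q⟩ = Σ_{h=0}^{p+q} 2^h Σ_{h₁+h₂=h, h₁≤p≤q−h₂, h₁,h₂≥0} C(p+q−h, p−h₁)·((q−h₂)−(p−h₁)+1)/((q−h₂)+1). Then ⟨p,q⟩ also equals Σ_{j=p+1}^{q+1} C(p+q+1, j). -/
/-!
Put `a = p - h₁` and `b = q - h₂`. The summand is then the ballot number
`C(a+b,a) - C(a+b,b+1)` with weight `2^((p-a)+(q-b))`. Both summations solve a recurrence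
`F (n+1) = 2 F n + t (n+1)`: by Pascal's rule, summing over `a` gives `C(p+b+1,p)`, and
`⟨p,q+1⟩ = 2⟨p,q⟩ + C(p+q+2,p)`.
-/

/-- `⟨p,q⟩ = C(p+q+1,p+1) + ⋯ + C(p+q+1,q+1)`. -/
def bracket (p q : ℕ) : ℕ :=
  ∑ j ∈ Finset.Icc (p + 1) (q + 1), Nat.choose (p + q + 1) j

open Finset

theorem sum_range_pow_mul_eq_of_succ {R : Type*} [CommSemiring R] (x : R) {t F : ℕ → R}
    (h₀ : F 0 = t 0) (hsucc : ∀ n, F (n + 1) = x * F n + t (n + 1)) (n : ℕ) :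
    ∑ k ∈ range (n + 1), x ^ (n - k) * t k = F n := by
  induction n with
  | zero => simp [h₀]
  | succ n ih =>
    rw [sum_range_succ, Nat.sub_self, pow_zero, one_mul, hsucc, ← ih, mul_sum]
    congr 1
    refine sum_congr rfl fun k hk => ?_
    rw [Nat.sub_add_comm (mem_range_succ_iff.mp hk), pow_succ']
    ring

theorem ballot_ratio_eq_choose_sub_choose {K : Type*} [Field K] [CharZero K] (a b : ℕ) :
    (Nat.choose (a + b) a : K) * ((b : K) - a + 1) / ((b : K) + 1)
      = Nat.choose (a + b) a - Nat.choose (a + b) (b + 1) := by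
  have hsucc : Nat.choose (a + b) (b + 1) * (b + 1) = Nat.choose (a + b) a * a := by
    rw [Nat.choose_succ_right_eq, Nat.add_sub_cancel, ← Nat.choose_symm_add]
  rw [div_eq_iff (Nat.cast_add_one_ne_zero b)]
  linear_combination (by exact_mod_cast hsucc :
    (Nat.choose (a + b) (b + 1) * (b + 1) : K) = Nat.choose (a + b) a * a)

theorem sum_two_pow_mul_choose_sub_choose {R : Type*} [CommRing R] (p b : ℕ) :
    ∑ a ∈ range (p + 1), 2 ^ (p - a) * ((Nat.choose (a + b) a : R) - Nat.choose (a + b) (b + 1))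
      = Nat.choose (p + b + 1) p := by
  refine sum_range_pow_mul_eq_of_succ (2 : R)
    (t := fun a => (Nat.choose (a + b) a : R) - Nat.choose (a + b) (b + 1))
    (F := fun p => (Nat.choose (p + b + 1) p : R)) ?_ (fun p => ?_) p
  · simp
  have hpascal := Nat.choose_succ_succ' (p + b + 1) p
  have hsymm := Nat.choose_symm_of_eq_add (show p + 1 + b = (b + 1) + p by ring)
  rw [show p + 1 + b + 1 = p + b + 1 + 1 by ring, hpascal, hsymm,
    show p + 1 + b = p + b + 1 by ring]
  push_cast
  ring

theorem sum_Icc_choose_pred_eq_bracket (p q : ℕ) :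
    ∑ j ∈ Icc (p + 1) (q + 1), Nat.choose (p + q + 1) (j - 1) = bracket p q := by
  refine sum_nbij' (fun j => p + q + 2 - j) (fun j => p + q + 2 - j) ?_ ?_ ?_ ?_
    fun j hj => Nat.choose_symm_of_eq_add ?_ <;> simp only [mem_Icc] at * <;> omega

theorem bracket_succ_right {p q : ℕ} (h : p ≤ q + 1) :
    bracket p (q + 1) = 2 * bracket p q + Nat.choose (p + (q + 1) + 1) p := by
  have hpascal : ∀ j ∈ Icc (p + 1) (q + 1),
      Nat.choose (p + q + 2) j = Nat.choose (p + q + 1) (j - 1) + Nat.choose (p + q + 1) j := by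
    intro j hj
    obtain ⟨k, rfl⟩ : ∃ k, j = k + 1 := ⟨j - 1, by grind⟩
    exact Nat.choose_succ_succ' _ _
  rw [bracket, show p + (q + 1) + 1 = p + q + 2 by ring, sum_Icc_succ_top (by omega),
    sum_congr rfl hpascal, sum_add_distrib, sum_Icc_choose_pred_eq_bracket, ← bracket,
    Nat.choose_symm_of_eq_add (show p + q + 2 = (q + 1 + 1) + p by ring)]
  ring

theorem bracket_add_eq_sum (p m : ℕ) :
    bracket p (p + m) = ∑ c ∈ range (m + 1), 2 ^ (m - c) * Nat.choose (p + (p + c) + 1) p := by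
  refine (sum_range_pow_mul_eq_of_succ 2 (F := fun m => bracket p (p + m)) ?_
    (fun m => bracket_succ_right (q := p + m) (by omega)) m).symm
  simp [bracket, ← two_mul, Nat.choose_symm_half]

theorem sum_filter_eq_sum_ballot (p m : ℕ) :
    ∑ h ∈ range (p + (p + m) + 1), (2 : ℚ) ^ h *
      ∑ h₁ ∈ (range (h + 1)).filter (fun h₁ => h₁ ≤ p ∧ p + (h - h₁) ≤ p + m),
        (Nat.choose (p + (p + m) - h) (p - h₁) : ℚ) *
          ((((p + m : ℕ) : ℚ) - (h - h₁)) - ((p : ℚ) - h₁) + 1) /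
            ((((p + m : ℕ) : ℚ) - (h - h₁)) + 1)
    = ∑ c ∈ range (m + 1), 2 ^ (m - c) * ∑ a ∈ range (p + 1), 2 ^ (p - a) *
        ((Nat.choose (a + (p + c)) a : ℚ) * (((p + c : ℕ) : ℚ) - a + 1) /
          (((p + c : ℕ) : ℚ) + 1)) := by
  simp_rw [mul_sum]
  rw [sum_sigma', sum_sigma']
  refine (sum_nbij' (fun x => ⟨(p - x.2) + (m - x.1), p - x.2⟩)
    (fun y => ⟨m - (y.1 - y.2), p - y.2⟩) ?_ ?_ ?_ ?_ ?_).symm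
  rotate_right
  · rintro ⟨c, a⟩ hca
    simp only [mem_sigma, mem_range] at hca
    have ha : p - (p - a) = a := by omega
    have hh : p + (p + m) - (p - a + (m - c)) = a + (p + c) := by omega
    rw [ha, hh]
    push_cast [Nat.cast_sub (show a ≤ p by omega), Nat.cast_sub (show c ≤ m by omega)]
    ring
  all_goals
    rintro ⟨x, y⟩ hxy
    simp only [mem_sigma, mem_range, mem_filter, Sigma.mk.injEq, heq_eq_eq] at hxy ⊢
    omega

/-- Formula (4.11) of the paper equals the closed form of Proposition 4.7:
`Σ_{h=0}^{p+q} 2^h Σ_{h₁+h₂=h, h₁≤p≤q−h₂} C(p+q−h, p−h₁)·((q−h₂)−(p−h₁)+1)/((q−h₂)+1)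
  = ⟨p,q⟩`. -/
theorem stmt_8 (p q : ℕ) (hpq : p ≤ q) :
    ∑ h ∈ Finset.range (p + q + 1), (2 : ℚ) ^ h *
      ∑ h₁ ∈ (Finset.range (h + 1)).filter (fun h₁ => h₁ ≤ p ∧ p + (h - h₁) ≤ q),
        (Nat.choose (p + q - h) (p - h₁) : ℚ) *
          (((q : ℚ) - (h - h₁)) - ((p : ℚ) - h₁) + 1) / (((q : ℚ) - (h - h₁)) + 1)
    = (bracket p q : ℚ) := by
  obtain ⟨m, rfl⟩ := Nat.exists_eq_add_of_le hpq
  simp_rw [sum_filter_eq_sum_ballot, ballot_ratio_eq_choose_sub_choose,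
    sum_two_pow_mul_choose_sub_choose, bracket_add_eq_sum]
  norm_cast
end

section
/- Let 𝔸 = (a₁,…,a_m) and 𝔹 = (b₁,…,b_n) be alphabets of independent variables. Then the supersymmetric Schur function S_{(n^m)}(𝔸−𝔹) indexed by the m×n rectangle equals the resultant R(𝔸,𝔹) = Π_{i=1}^{m} Π_{j=1}^{n} (a_i − b_j). -/
open PowerSeries MvPolynomial

/-- `Π_{m ∈ M} (1 − m·z)`. -/
noncomputable def prodOneSub {R : Type*} [CommRing R] (M : Multiset R) : PowerSeries R :=
  (M.map fun m => (1 : PowerSeries R) - PowerSeries.C m * PowerSeries.X).prod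

/-- The supersymmetric complete function `h_k(𝔸−𝔹)`, the `k`-th coefficient of
`Π_{b∈𝔹}(1−bz) / Π_{a∈𝔸}(1−az)`. -/
noncomputable def hAB {R : Type*} [CommRing R] (A B : Multiset R) (k : ℕ) : R :=
  PowerSeries.coeff k (prodOneSub B * (prodOneSub A).invOfUnit 1)

/-- `h_k(𝔸−𝔹)` extended by `0` to negative integer indices. -/
noncomputable def hABz {R : Type*} [CommRing R] (A B : Multiset R) (k : ℤ) : R :=
  if k < 0 then 0 else hAB A B k.toNat

/-- The supersymmetric Schur function `S_I(𝔸−𝔹) = det( h_{i_p+p−q}(𝔸−𝔹) )_{1≤p,q≤h}`,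
for a partition `I` with `h` parts (written in weakly increasing order). -/
noncomputable def schurAB {R : Type*} [CommRing R] (A B : Multiset R) {h : ℕ}
    (I : Fin h → ℕ) : R :=
  Matrix.det (Matrix.of fun p q : Fin h =>
    hABz A B ((I p : ℤ) + (p : ℕ) - (q : ℕ)))

/-!
It suffices to prove the identity in the fraction field of `ℤ[𝔸, 𝔹]`, where the `a_i` are
distinct and nonzero. With `c_i = Π_j (a_i - b_j) / Π_{l ≠ i} (a_i - a_l)`, the polynomial
`z^m Π_j (1 - b_j z) - z^(n+1) Σ_i c_i Π_{l ≠ i} (1 - a_l z)` vanishes at every `z = 1/a_i`,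
so it is `Π_i (1 - a_i z) T(z)` with `deg T ≤ n`. Dividing by `Π_i (1 - a_i z)` and reading off
coefficients of index `≥ n + 1` yields `h_k(𝔸 - 𝔹) = Σ_i c_i a_i^(k + m - 1 - n)` whenever
`k ≥ n + 1 - m`; the factor `z^m` makes this hold also for the negative `k` that occur, where
`h_k = 0`. So the matrix `(h_{n+p-q})` is `Vᵀ · diag(c) · V'` for the Vandermonde matrix
`V = (a_i^q)` and its column reversal `V' = (a_i^(m-1-q))`, and
`det V · det V' = Π_i Π_{l ≠ i} (a_i - a_l)` cancels the denominators of the `c_i`.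
-/

open scoped Polynomial

section Transfer

variable {R S : Type*} [CommRing R] [CommRing S]

lemma constantCoeff_prodOneSub (M : Multiset R) : constantCoeff (prodOneSub M) = 1 := by
  simp [prodOneSub, map_multiset_prod]

lemma prodOneSub_mul_invOfUnit (M : Multiset R) :
    prodOneSub M * (prodOneSub M).invOfUnit 1 = 1 :=
  mul_invOfUnit _ 1 (by simp [constantCoeff_prodOneSub])

lemma map_prodOneSub (f : R →+* S) (M : Multiset R) :
    PowerSeries.map f (prodOneSub M) = prodOneSub (M.map f) := by
  simp [prodOneSub, map_multiset_prod, Multiset.map_map]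

lemma map_hAB (f : R →+* S) (A B : Multiset R) (k : ℕ) :
    f (hAB A B k) = hAB (A.map f) (B.map f) k := by
  have hinv : PowerSeries.map f ((prodOneSub A).invOfUnit 1) =
      (prodOneSub (A.map f)).invOfUnit 1 := by
    refine (left_inv_eq_right_inv (invOfUnit_mul _ 1 ?_) ?_).symm
    · simp [constantCoeff_prodOneSub]
    · rw [← map_prodOneSub, ← map_mul, prodOneSub_mul_invOfUnit, map_one]
  rw [hAB, hAB, ← PowerSeries.coeff_map, map_mul, map_prodOneSub, hinv]

lemma map_hABz (f : R →+* S) (A B : Multiset R) (k : ℤ) :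
    f (hABz A B k) = hABz (A.map f) (B.map f) k := by
  unfold hABz
  split_ifs
  · exact map_zero f
  · exact map_hAB f A B _

lemma map_schurAB (f : R →+* S) (A B : Multiset R) {h : ℕ} (I : Fin h → ℕ) :
    f (schurAB A B I) = schurAB (A.map f) (B.map f) I := by
  rw [schurAB, RingHom.map_det]
  congr 1
  ext p q
  exact map_hABz f A B _

end Transfer

section Coefficients

variable {R : Type*} [CommRing R]

lemma hABz_eq_coeff_X_pow_mul (A B : Multiset R) {k : ℤ} {d j : ℕ} (h : k + d = j) :
    hABz A B k =
      PowerSeries.coeff j (PowerSeries.X ^ d * (prodOneSub B * (prodOneSub A).invOfUnit 1)) := by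
  rw [hABz, coeff_X_pow_mul']
  split_ifs with hk hd hd
  · omega
  · rfl
  · rw [hAB]; congr; omega
  · omega

lemma prodOneSub_map_eq_prod {ι : Type*} (s : Finset ι) (v : ι → R) :
    prodOneSub (s.val.map v) = ∏ i ∈ s, (1 - PowerSeries.C (v i) * PowerSeries.X) := by
  rw [prodOneSub, Multiset.map_map, Finset.prod_eq_multiset_prod]
  rfl

lemma mk_pow_mul_one_sub_C_mul_X (a : R) :
    mk (a ^ ·) * (1 - PowerSeries.C a * PowerSeries.X) = 1 := by
  have h := congrArg (rescale a) (mk_one_mul_one_sub_eq_one R)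
  simpa [rescale_mk] using h

lemma prod_erase_one_sub_mul_invOfUnit {ι : Type*} [Fintype ι] [DecidableEq ι] (a : ι → R)
    (i : ι) :
    (∏ l ∈ Finset.univ.erase i, (1 - PowerSeries.C (a l) * PowerSeries.X)) *
      (prodOneSub (Finset.univ.val.map a)).invOfUnit 1 = mk (a i ^ ·) := by
  set U := (prodOneSub (Finset.univ.val.map a)).invOfUnit 1
  have hPU : (∏ l, (1 - PowerSeries.C (a l) * PowerSeries.X)) * U = 1 := by
    rw [← prodOneSub_map_eq_prod]
    exact prodOneSub_mul_invOfUnit _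
  rw [← Finset.mul_prod_erase _ _ (Finset.mem_univ i)] at hPU
  calc _ = mk (a i ^ ·) * (1 - PowerSeries.C (a i) * PowerSeries.X) *
        ((∏ l ∈ Finset.univ.erase i, (1 - PowerSeries.C (a l) * PowerSeries.X)) * U) := by
        rw [mk_pow_mul_one_sub_C_mul_X, one_mul]
    _ = mk (a i ^ ·) := by rw [mul_assoc, ← mul_assoc (1 - _), hPU, mul_one]

end Coefficients

section OneSubCMulX

variable {K : Type*} [Field K]

lemma isCoprime_one_sub_C_mul_X {a b : K} (h : a ≠ b) :
    IsCoprime (1 - Polynomial.C a * Polynomial.X) (1 - Polynomial.C b * Polynomial.X) := by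
  have hC : Polynomial.C (b - a)⁻¹ * (Polynomial.C b - Polynomial.C a) = 1 := by
    rw [← map_sub, ← map_mul, inv_mul_cancel₀ (sub_ne_zero.mpr h.symm), map_one]
  exact ⟨Polynomial.C (b - a)⁻¹ * Polynomial.C b, -(Polynomial.C (b - a)⁻¹ * Polynomial.C a),
    by linear_combination hC⟩

lemma one_sub_C_mul_X_dvd {a : K} (ha : a ≠ 0) {p : K[X]} (hp : p.eval a⁻¹ = 0) :
    1 - Polynomial.C a * Polynomial.X ∣ p := by
  have hfac : 1 - Polynomial.C a * Polynomial.X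
      = Polynomial.C (-a) * (Polynomial.X - Polynomial.C a⁻¹) := by
    rw [mul_sub, ← map_mul, neg_mul, mul_inv_cancel₀ ha]
    simp only [map_neg, map_one]
    ring
  rw [hfac]
  exact (Polynomial.isUnit_C.mpr (neg_ne_zero.mpr ha).isUnit).mul_left_dvd.mpr
    (Polynomial.dvd_iff_isRoot.mpr hp)

variable {ι : Type*} (s : Finset ι) (v : ι → K)

lemma eval_inv_prod_one_sub_C_mul_X {x : K} (hx : x ≠ 0) :
    (∏ l ∈ s, (1 - Polynomial.C (v l) * Polynomial.X)).eval x⁻¹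
      = x⁻¹ ^ s.card * ∏ l ∈ s, (x - v l) := by
  rw [Polynomial.eval_prod, ← Finset.prod_const, ← Finset.prod_mul_distrib]
  refine Finset.prod_congr rfl fun l _ => ?_
  simp only [Polynomial.eval_sub, Polynomial.eval_one, Polynomial.eval_mul, Polynomial.eval_C,
    Polynomial.eval_X]
  field_simp

lemma one_sub_C_mul_X_eq_linear (c : K) :
    1 - Polynomial.C c * Polynomial.X = Polynomial.C (-c) * Polynomial.X + Polynomial.C 1 := by
  rw [map_neg, map_one]; ring

lemma natDegree_prod_one_sub_C_mul_X_le :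
    (∏ l ∈ s, (1 - Polynomial.C (v l) * Polynomial.X)).natDegree ≤ s.card := by
  refine (Polynomial.natDegree_prod_le _ _).trans ?_
  refine (Finset.sum_le_card_nsmul _ _ 1 fun l _ => ?_).trans (by simp)
  rw [one_sub_C_mul_X_eq_linear]
  exact Polynomial.natDegree_linear_le

lemma natDegree_prod_one_sub_C_mul_X {v : ι → K} (hv : ∀ l ∈ s, v l ≠ 0) :
    (∏ l ∈ s, (1 - Polynomial.C (v l) * Polynomial.X)).natDegree = s.card := by
  have hlin : ∀ l ∈ s, (1 - Polynomial.C (v l) * Polynomial.X).natDegree = 1 := fun l hl => by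
    rw [one_sub_C_mul_X_eq_linear, Polynomial.natDegree_linear (neg_ne_zero.mpr (hv l hl))]
  rw [Polynomial.natDegree_prod _ _ fun l hl h => by simpa [h] using hlin l hl,
    Finset.sum_congr rfl hlin]
  simp

end OneSubCMulX

section PartialFractions

variable {K : Type*} [Field K] {m n : ℕ} (a : Fin m → K) (b : Fin n → K)

noncomputable def partialFractionCoeff (i : Fin m) : K :=
  Lagrange.nodalWeight Finset.univ a i * ∏ j, (a i - b j)

lemma partialFractionCoeff_mul_prod_erase (ha : Function.Injective a) (i : Fin m) :
    partialFractionCoeff a b i * ∏ l ∈ Finset.univ.erase i, (a i - a l) = ∏ j, (a i - b j) := by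
  have hD : ∏ l ∈ Finset.univ.erase i, (a i - a l) ≠ 0 := Finset.prod_ne_zero_iff.mpr
    fun l hl => sub_ne_zero.mpr (ha.ne (Finset.ne_of_mem_erase hl).symm)
  rw [partialFractionCoeff, Lagrange.nodalWeight_eq_eval_nodal_erase_inv, Lagrange.eval_nodal]
  field_simp

noncomputable def partialFractionNumerator : K[X] :=
  ∑ i, Polynomial.C (partialFractionCoeff a b i) *
    ∏ l ∈ Finset.univ.erase i, (1 - Polynomial.C (a l) * Polynomial.X)

lemma eval_inv_partialFractionNumerator (ha : Function.Injective a) (h0 : ∀ i, a i ≠ 0)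
    (i : Fin m) :
    (partialFractionNumerator a b).eval (a i)⁻¹ = (a i)⁻¹ ^ (m - 1) * ∏ j, (a i - b j) := by
  have hvanish : ∀ i' ≠ i, (∏ l ∈ Finset.univ.erase i',
      (1 - Polynomial.C (a l) * Polynomial.X)).eval (a i)⁻¹ = 0 := fun i' hi' => by
    rw [Polynomial.eval_prod]
    refine Finset.prod_eq_zero (Finset.mem_erase.mpr ⟨hi'.symm, Finset.mem_univ i⟩) ?_
    simp [mul_inv_cancel₀ (h0 i)]
  rw [partialFractionNumerator, Polynomial.eval_finsetSum,
    Finset.sum_eq_single i (fun i' _ hi' => by rw [Polynomial.eval_mul, hvanish i' hi', mul_zero])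
      (by simp),
    Polynomial.eval_mul, eval_inv_prod_one_sub_C_mul_X _ _ (h0 i), Polynomial.eval_C,
    Finset.card_erase_of_mem (Finset.mem_univ i), Finset.card_univ, Fintype.card_fin,
    ← partialFractionCoeff_mul_prod_erase a b ha i]
  ring

lemma natDegree_X_pow_mul_partialFractionNumerator_le :
    (Polynomial.X ^ (n + 1) * partialFractionNumerator a b).natDegree ≤ m + n := by
  rcases Nat.eq_zero_or_pos m with rfl | hm
  · simp [partialFractionNumerator]
  have hN : (partialFractionNumerator a b).natDegree ≤ m - 1 := by
    refine Polynomial.natDegree_sum_le_of_forall_le _ _ fun i _ => ?_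
    refine (Polynomial.natDegree_C_mul_le _ _).trans ?_
    simpa using natDegree_prod_one_sub_C_mul_X_le (Finset.univ.erase i) a
  refine Polynomial.natDegree_mul_le.trans ?_
  rw [Polynomial.natDegree_X_pow]
  omega

lemma prod_one_sub_C_mul_X_dvd (ha : Function.Injective a) (h0 : ∀ i, a i ≠ 0) :
    ∏ i, (1 - Polynomial.C (a i) * Polynomial.X) ∣
      Polynomial.X ^ m * ∏ j, (1 - Polynomial.C (b j) * Polynomial.X)
        - Polynomial.X ^ (n + 1) * partialFractionNumerator a b := by
  refine Finset.prod_dvd_of_coprime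
    (fun i _ i' _ hii' => isCoprime_one_sub_C_mul_X (ha.ne hii')) fun i _ => ?_
  refine one_sub_C_mul_X_dvd (h0 i) ?_
  rw [Polynomial.eval_sub, Polynomial.eval_mul, Polynomial.eval_mul,
    eval_inv_partialFractionNumerator a b ha h0, eval_inv_prod_one_sub_C_mul_X _ _ (h0 i)]
  simp only [Polynomial.eval_pow, Polynomial.eval_X, Finset.card_univ, Fintype.card_fin]
  rw [← Nat.sub_add_cancel (Fin.pos i), pow_succ, Nat.add_sub_cancel]
  ring

lemma exists_partialFraction (ha : Function.Injective a) (h0 : ∀ i, a i ≠ 0) :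
    ∃ T : K[X], T.natDegree ≤ n ∧
      Polynomial.X ^ m * ∏ j, (1 - Polynomial.C (b j) * Polynomial.X)
        = (∏ i, (1 - Polynomial.C (a i) * Polynomial.X)) * T
          + Polynomial.X ^ (n + 1) * partialFractionNumerator a b := by
  obtain ⟨T, hT⟩ := prod_one_sub_C_mul_X_dvd a b ha h0
  refine ⟨T, ?_, by rw [← hT]; ring⟩
  have hdeg : (Polynomial.X ^ m * ∏ j, (1 - Polynomial.C (b j) * Polynomial.X)
      - Polynomial.X ^ (n + 1) * partialFractionNumerator a b).natDegree ≤ m + n := by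
    refine (Polynomial.natDegree_sub_le _ _).trans
      (max_le ?_ (natDegree_X_pow_mul_partialFractionNumerator_le a b))
    refine Polynomial.natDegree_mul_le.trans (add_le_add (Polynomial.natDegree_X_pow_le m) ?_)
    simpa using natDegree_prod_one_sub_C_mul_X_le Finset.univ b
  have hPne : ∏ i, (1 - Polynomial.C (a i) * Polynomial.X) ≠ 0 :=
    Finset.prod_ne_zero_iff.mpr fun i _ h => by simpa using congrArg (Polynomial.eval 0) h
  rcases eq_or_ne T 0 with rfl | hT0
  · simp
  rw [hT, Polynomial.natDegree_mul hPne hT0,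
    natDegree_prod_one_sub_C_mul_X Finset.univ fun i _ => h0 i, Finset.card_univ,
    Fintype.card_fin] at hdeg
  omega

lemma hABz_eq_sum_partialFractionCoeff_mul_pow (ha : Function.Injective a) (h0 : ∀ i, a i ≠ 0)
    {k : ℤ} {e : ℕ} (h : k + m = e + n + 1) :
    hABz (Finset.univ.val.map a) (Finset.univ.val.map b) k
      = ∑ i, partialFractionCoeff a b i * a i ^ e := by
  obtain ⟨T, hTdeg, hT⟩ := exists_partialFraction a b ha h0
  replace hT := congrArg (Polynomial.coeToPowerSeries.ringHom (R := K)) hT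
  simp only [partialFractionNumerator, map_add, map_mul, map_pow, map_sum, map_prod, map_sub,
    map_one, Polynomial.coeToPowerSeries.ringHom_apply, Polynomial.coe_X, Polynomial.coe_C] at hT
  have hseries : PowerSeries.X ^ m *
      (prodOneSub (Finset.univ.val.map b) * (prodOneSub (Finset.univ.val.map a)).invOfUnit 1)
      = (T : K⟦X⟧) + PowerSeries.X ^ (n + 1) *
          ∑ i, PowerSeries.C (partialFractionCoeff a b i) * mk (a i ^ ·) := by
    rw [prodOneSub_map_eq_prod, ← mul_assoc, hT, add_mul, mul_comm (∏ i, _) (T : K⟦X⟧),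
      mul_assoc, ← prodOneSub_map_eq_prod, prodOneSub_mul_invOfUnit, mul_one, mul_assoc,
      Finset.sum_mul]
    simp only [mul_assoc, prod_erase_one_sub_mul_invOfUnit]
  rw [hABz_eq_coeff_X_pow_mul _ _ (d := m) (j := e + n + 1) (by push_cast; exact h), hseries,
    map_add, Polynomial.coeff_coe, Polynomial.coeff_eq_zero_of_natDegree_lt (by omega), zero_add,
    add_assoc, coeff_X_pow_mul, map_sum]
  simp

end PartialFractions

section Vandermonde

variable {m : ℕ}

lemma prod_prod_erase_eq_prod_prod_Ioi {β : Type*} [CommMonoid β] (f : Fin m → Fin m → β) :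
    ∏ i, ∏ l ∈ Finset.univ.erase i, f i l = ∏ i, ∏ j ∈ Finset.Ioi i, (f j i * f i j) := by
  have herase (i : Fin m) : Finset.univ.erase i = Finset.Iio i ∪ Finset.Ioi i := by
    ext l; simp [eq_comm (a := l)]
  have hswap : ∏ i, ∏ l ∈ Finset.Iio i, f i l = ∏ l, ∏ i ∈ Finset.Ioi l, f i l :=
    Finset.prod_comm' fun i l => by simp
  simp_rw [Finset.prod_mul_distrib, ← hswap, ← Finset.prod_mul_distrib]
  refine Finset.prod_congr rfl fun i _ => ?_
  rw [herase, Finset.prod_union (Finset.disjoint_left.mpr fun l h1 h2 =>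
    lt_asymm (Finset.mem_Iio.mp h1) (Finset.mem_Ioi.mp h2))]

variable {R : Type*} [CommRing R]

lemma det_of_eq_sum_mul_pow (w a : Fin m → R) {f : Fin m → Fin m → R}
    (hf : ∀ p q, f p q = ∑ i, w i * a i ^ ((p : ℕ) + (q.rev : ℕ))) :
    (Matrix.of f).det = (∏ i, w i) * ∏ i, ∏ j ∈ Finset.Ioi i, ((a j - a i) * (a i - a j)) := by
  have hfac : Matrix.of f = (Matrix.vandermonde a).transpose *
      Matrix.of fun i q => w i * Matrix.projVandermonde 1 a i q := by
    ext p q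
    simp only [hf, Matrix.mul_apply, Matrix.transpose_apply, Matrix.vandermonde_apply,
      Matrix.of_apply, Matrix.projVandermonde_apply, Pi.one_apply, one_pow, one_mul]
    refine Finset.sum_congr rfl fun i _ => ?_
    ring
  rw [hfac, Matrix.det_mul, Matrix.det_transpose, Matrix.det_mul_column,
    Matrix.det_vandermonde, Matrix.det_projVandermonde]
  simp only [Pi.one_apply, one_mul, Finset.prod_mul_distrib]
  ring

end Vandermonde

theorem schurAB_rectangle_of_injective {K : Type*} [Field K] {m n : ℕ} {a : Fin m → K}
    (b : Fin n → K) (ha : Function.Injective a) (h0 : ∀ i, a i ≠ 0) :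
    schurAB (Finset.univ.val.map a) (Finset.univ.val.map b) (fun _ : Fin m => n)
      = ∏ i, ∏ j, (a i - b j) := by
  have hentry (p q : Fin m) :
      hABz (Finset.univ.val.map a) (Finset.univ.val.map b) ((n : ℤ) + (p : ℕ) - (q : ℕ))
        = ∑ i, partialFractionCoeff a b i * a i ^ ((p : ℕ) + (q.rev : ℕ)) :=
    hABz_eq_sum_partialFractionCoeff_mul_pow a b ha h0 (by rw [Fin.val_rev]; push_cast; omega)
  rw [schurAB, det_of_eq_sum_mul_pow (partialFractionCoeff a b) a hentry,
    ← prod_prod_erase_eq_prod_prod_Ioi fun i l => a i - a l, ← Finset.prod_mul_distrib]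
  exact Finset.prod_congr rfl fun i _ => partialFractionCoeff_mul_prod_erase a b ha i

/-- For alphabets `𝔸 = (a₁,…,a_m)`, `𝔹 = (b₁,…,b_n)` of independent variables,
`S_{(n^m)}(𝔸−𝔹) = Π_{i,j} (a_i − b_j)`. -/
theorem stmt_10 (m n : ℕ) :
    schurAB
        ((Finset.univ : Finset (Fin m)).val.map
          (fun i => (X (Sum.inl i) : MvPolynomial (Fin m ⊕ Fin n) ℤ)))
        ((Finset.univ : Finset (Fin n)).val.map (fun j => X (Sum.inr j)))
        (fun _ : Fin m => n) =
      ∏ i : Fin m, ∏ j : Fin n,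
        ((X (Sum.inl i) : MvPolynomial (Fin m ⊕ Fin n) ℤ) - X (Sum.inr j)) := by
  set φ := algebraMap (MvPolynomial (Fin m ⊕ Fin n) ℤ)
    (FractionRing (MvPolynomial (Fin m ⊕ Fin n) ℤ))
  have hφ : Function.Injective φ := IsFractionRing.injective _ _
  refine hφ ?_
  have ha : Function.Injective (φ ∘ fun i : Fin m => X (Sum.inl i)) :=
    fun i i' h => Sum.inl_injective (X_injective (hφ h))
  have h0 (i : Fin m) : (φ ∘ fun i : Fin m => X (Sum.inl i)) i ≠ 0 :=
    (map_ne_zero_iff φ hφ).mpr (X_ne_zero _)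
  rw [map_schurAB, Multiset.map_map, Multiset.map_map, schurAB_rectangle_of_injective _ ha h0]
  simp [φ]
end

section
/- In the ring of symmetric polynomials in two variables x₁, x₂, the Pieri rule gives h_{i−1}(𝔻)·3·h₁(x₁,x₂) = h_i(𝔻) + S_{1,i−1}(𝔻), where 𝔻 = {2x₁, 2x₂, x₁+x₂}; consequently, for 1 ≤ p ≤ q, the coefficient of the Schur polynomial s_{(q,p)}(x₁,x₂) in the expansion of S_{1,p+q−1}(𝔻) equals 2·⟨p,q⟩, where ⟨p,q⟩ is the coefficient of s_{(q,p)} in h_{p+q}(𝔻). -/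
open MvPolynomial

/-! Splitting off the quantity `x₁ + x₂` from `𝔻` gives
`h_N(𝔻) = (x₁ + x₂)·h_{N−1}(𝔻) + 2^N·h_N(x₁, x₂)`, hence
`S_{1,N−1}(𝔻) = 2·h_N(𝔻) − 3·2^N·s_{(N,0)}`: the Schur expansions of `S_{1,N−1}(𝔻)` and
`2·h_N(𝔻)` differ only at `s_{(N,0)}`. Schur expansions are unique, because the coefficient of
`x₁^{N−a} x₂^a` in `∑_b e_b·s_{(N−b,b)}` is the partial sum `e_0 + ⋯ + e_a`. -/

/-- The complete homogeneous symmetric polynomial of degree `i` in three quantities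
`u, v, w`. -/
noncomputable def hThree (u v w : MvPolynomial (Fin 2) ℤ) (i : ℕ) : MvPolynomial (Fin 2) ℤ :=
  ∑ p ∈ Finset.Nat.antidiagonalTuple 3 i, u ^ p 0 * v ^ p 1 * w ^ p 2

/-- `h_i(𝔻)` where `𝔻 = {2x₁, 2x₂, x₁+x₂}`. -/
noncomputable def hD (i : ℕ) : MvPolynomial (Fin 2) ℤ :=
  hThree (2 * X 0) (2 * X 1) (X 0 + X 1) i

/-- `S_{1,i−1}(𝔻) = h₁(𝔻)·h_{i−1}(𝔻) − h_i(𝔻)`. -/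
noncomputable def sOneD (i : ℕ) : MvPolynomial (Fin 2) ℤ :=
  hD 1 * hD (i - 1) - hD i

/-- The complete homogeneous symmetric polynomial `h_m(x₁,x₂)` in two variables. -/
noncomputable def hTwo (m : ℕ) : MvPolynomial (Fin 2) ℤ :=
  ∑ t ∈ Finset.range (m + 1), X 0 ^ t * X 1 ^ (m - t)

/-- The Schur polynomial `s_{(q,p)}(x₁,x₂) = (x₁x₂)^p · h_{q−p}(x₁,x₂)`. -/
noncomputable def schurTwo (q p : ℕ) : MvPolynomial (Fin 2) ℤ :=
  (X 0 * X 1) ^ p * hTwo (q - p)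

open Finset

lemma sum_antidiagonalTuple_three {M : Type*} [AddCommMonoid M] (f : ℕ → ℕ → ℕ → M) (n : ℕ) :
    ∑ t ∈ Nat.antidiagonalTuple 3 n, f (t 0) (t 1) (t 2) =
      ∑ mc ∈ antidiagonal n, ∑ ab ∈ antidiagonal mc.1, f ab.1 ab.2 mc.2 := by
  rw [sum_sigma']
  refine sum_nbij' (fun t => ⟨(t 0 + t 1, t 2), (t 0, t 1)⟩) (fun s => ![s.2.1, s.2.2, s.1.2])
    ?_ ?_ ?_ ?_ ?_
  · intro t ht
    simp_all [Nat.mem_antidiagonalTuple, Fin.sum_univ_three]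
  · rintro ⟨⟨m, c⟩, ⟨a, b⟩⟩ hs
    simp_all [Nat.mem_antidiagonalTuple, Fin.sum_univ_three]
  · intro t _
    ext i
    fin_cases i <;> rfl
  · rintro ⟨⟨m, c⟩, ⟨a, b⟩⟩ hs
    simp_all
  · intro t _
    rfl

lemma hThree_zero (u v w : MvPolynomial (Fin 2) ℤ) : hThree u v w 0 = 1 := by
  simp [hThree, Nat.antidiagonalTuple_zero_right]

lemma hThree_succ (u v w : MvPolynomial (Fin 2) ℤ) (n : ℕ) :
    hThree u v w (n + 1) =
      w * hThree u v w n + ∑ ab ∈ antidiagonal (n + 1), u ^ ab.1 * v ^ ab.2 := by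
  simp only [hThree, sum_antidiagonalTuple_three (fun a b c => u ^ a * v ^ b * w ^ c),
    Nat.sum_antidiagonal_succ', mul_sum]
  simp only [pow_zero, mul_one, pow_succ]
  rw [add_comm]
  congr 1
  exact sum_congr rfl fun _ _ => sum_congr rfl fun _ _ => by ring

lemma sum_antidiagonal_mul_pow {R : Type*} [CommSemiring R] (c x y : R) (m : ℕ) :
    ∑ ab ∈ antidiagonal m, (c * x) ^ ab.1 * (c * y) ^ ab.2 =
      c ^ m * ∑ ab ∈ antidiagonal m, x ^ ab.1 * y ^ ab.2 := by
  rw [mul_sum]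
  refine sum_congr rfl fun ab hab => ?_
  rw [← mem_antidiagonal.mp hab, mul_pow, mul_pow, pow_add]
  ring

lemma hTwo_eq_sum_antidiagonal (m : ℕ) :
    hTwo m = ∑ ab ∈ antidiagonal m, X 0 ^ ab.1 * X 1 ^ ab.2 := by
  rw [hTwo, Nat.sum_antidiagonal_eq_sum_range_succ_mk]

lemma hTwo_one : hTwo 1 = X 0 + X 1 := by
  simp [hTwo, sum_range_succ, add_comm]

lemma hD_zero : hD 0 = 1 := hThree_zero _ _ _

lemma hD_succ (n : ℕ) : hD (n + 1) = hTwo 1 * hD n + 2 ^ (n + 1) * hTwo (n + 1) := by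
  rw [hD, hThree_succ, sum_antidiagonal_mul_pow, hTwo_one, hTwo_eq_sum_antidiagonal]
  rfl

lemma hD_one : hD 1 = 3 * hTwo 1 := by
  rw [hD_succ, hD_zero]
  ring

lemma sOneD_succ (n : ℕ) :
    sOneD (n + 1) = 2 * hD (n + 1) - 3 * 2 ^ (n + 1) * hTwo (n + 1) := by
  rw [sOneD, hD_one, Nat.add_sub_cancel, hD_succ]
  ring

noncomputable def pairExp (i j : ℕ) : Fin 2 →₀ ℕ := Finsupp.single 0 i + Finsupp.single 1 j

@[simp] lemma pairExp_apply_zero (i j : ℕ) : pairExp i j 0 = i := by simp [pairExp]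

@[simp] lemma pairExp_apply_one (i j : ℕ) : pairExp i j 1 = j := by simp [pairExp]

lemma pairExp_inj {i j i' j' : ℕ} : pairExp i j = pairExp i' j' ↔ i = i' ∧ j = j' := by
  simp [Finsupp.ext_iff, Fin.forall_fin_two]

lemma pairExp_le {i j i' j' : ℕ} : pairExp i j ≤ pairExp i' j' ↔ i ≤ i' ∧ j ≤ j' := by
  simp [Finsupp.le_def, Fin.forall_fin_two]

lemma pairExp_sub (i j i' j' : ℕ) : pairExp i j - pairExp i' j' = pairExp (i - i') (j - j') := by
  ext k; fin_cases k <;> simp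

lemma X_pow_mul_X_pow (i j : ℕ) :
    (X 0 ^ i * X 1 ^ j : MvPolynomial (Fin 2) ℤ) = monomial (pairExp i j) 1 := by
  rw [X_pow_eq_monomial, X_pow_eq_monomial, monomial_mul, one_mul, pairExp]

lemma coeff_hTwo (i j : ℕ) : coeff (pairExp i j) (hTwo (i + j)) = 1 := by
  simp only [hTwo_eq_sum_antidiagonal, X_pow_mul_X_pow, coeff_sum, coeff_monomial, pairExp_inj]
  rw [sum_eq_single_of_mem (i, j) (mem_antidiagonal.mpr rfl)]
  · simp
  · rintro ⟨a, b⟩ - hab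
    simp_all [Prod.ext_iff]

lemma coeff_schurTwo {N a b : ℕ} (ha : 2 * a ≤ N) :
    coeff (pairExp (N - a) a) (schurTwo (N - b) b) = if b ≤ a then 1 else 0 := by
  rw [schurTwo, mul_pow, X_pow_mul_X_pow, coeff_monomial_mul', pairExp_sub, one_mul]
  simp only [pairExp_le]
  by_cases hba : b ≤ a
  · rw [if_pos ⟨by omega, hba⟩, if_pos hba, show N - b - b = N - a - b + (a - b) by omega,
      coeff_hTwo]
  · rw [if_neg (by omega), if_neg hba]

noncomputable def schurExpansion (N : ℕ) : (ℕ → ℤ) →ₗ[ℤ] MvPolynomial (Fin 2) ℤ where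
  toFun e := ∑ a ∈ (range (N + 1)).filter (fun a => 2 * a ≤ N), C (e a) * schurTwo (N - a) a
  map_add' e e' := by simp only [Pi.add_apply, map_add, add_mul, sum_add_distrib]
  map_smul' k e := by simp only [Pi.smul_apply, smul_eq_mul, map_mul, mul_assoc, ← mul_sum,
    RingHom.id_apply, smul_eq_C_mul]

lemma schurExpansion_apply (N : ℕ) (e : ℕ → ℤ) : schurExpansion N e =
    ∑ a ∈ (range (N + 1)).filter (fun a => 2 * a ≤ N), C (e a) * schurTwo (N - a) a := rfl

lemma schurExpansion_single_zero (N : ℕ) (r : ℤ) :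
    schurExpansion N (Pi.single 0 r) = C r * hTwo N := by
  rw [schurExpansion_apply, sum_eq_single_of_mem 0 (by simp)]
  · simp [schurTwo]
  · intro a _ ha
    simp [ha]

lemma coeff_schurExpansion {N a : ℕ} (e : ℕ → ℤ) (ha : 2 * a ≤ N) :
    coeff (pairExp (N - a) a) (schurExpansion N e) = ∑ b ∈ range (a + 1), e b := by
  rw [schurExpansion_apply, coeff_sum]
  simp only [coeff_C_mul, coeff_schurTwo ha, mul_ite, mul_one, mul_zero]
  rw [← sum_filter, filter_filter]
  congr 1
  ext b
  simp only [mem_filter, mem_range]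
  omega

lemma eq_zero_of_schurExpansion_eq_zero {N a : ℕ} {e : ℕ → ℤ} (he : schurExpansion N e = 0)
    (ha : 2 * a ≤ N) : e a = 0 := by
  have partial_sum_eq_zero : ∀ b, 2 * b ≤ N → ∑ i ∈ range (b + 1), e i = 0 := fun b hb => by
    rw [← coeff_schurExpansion e hb, he, coeff_zero]
  cases a with
  | zero => simpa using partial_sum_eq_zero 0 ha
  | succ k =>
    simpa [sum_range_succ, partial_sum_eq_zero k (by omega)] using partial_sum_eq_zero (k + 1) ha

/-- Pieri: `h_{i−1}(𝔻)·3·h₁(x₁,x₂) = h_i(𝔻) + S_{1,i−1}(𝔻)`; consequently, expanding in the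
basis of Schur polynomials `s_{(q,p)}` of fixed degree `p+q`, the coefficient of `s_{(q,p)}` in
`S_{1,p+q−1}(𝔻)` is twice the coefficient `⟨p,q⟩` of `s_{(q,p)}` in `h_{p+q}(𝔻)`, for `1 ≤ p ≤ q`. -/
theorem stmt_13 :
    (∀ i : ℕ, 1 ≤ i →
      hD (i - 1) * (3 * hTwo 1) = hD i + sOneD i) ∧
    (∀ (p q : ℕ) (c d : ℕ → ℤ), 1 ≤ p → p ≤ q →
      sOneD (p + q) =
        (∑ a ∈ (Finset.range (p + q + 1)).filter (fun a => 2 * a ≤ p + q),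
          C (c a) * schurTwo (p + q - a) a) →
      hD (p + q) =
        (∑ a ∈ (Finset.range (p + q + 1)).filter (fun a => 2 * a ≤ p + q),
          C (d a) * schurTwo (p + q - a) a) →
      c p = 2 * d p) := by
  refine ⟨fun i _ => by rw [sOneD, hD_one]; ring, ?_⟩
  intro p q c d hp hpq hc hd
  rw [← schurExpansion_apply] at hc hd
  obtain ⟨n, hn⟩ : ∃ n, p + q = n + 1 := ⟨p + q - 1, by omega⟩
  have hker : schurExpansion (p + q) (c - (2 : ℤ) • d + Pi.single 0 (3 * 2 ^ (p + q))) = 0 := by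
    rw [map_add, map_sub, map_smul, ← hc, ← hd, schurExpansion_single_zero, hn, sOneD_succ]
    simp only [zsmul_eq_mul, Int.cast_ofNat, map_mul, map_pow, map_ofNat]
    ring
  have hp_coeff := eq_zero_of_schurExpansion_eq_zero hker (show 2 * p ≤ p + q by omega)
  simpa [Pi.single_eq_of_ne (show p ≠ 0 by omega), sub_eq_zero] using hp_coeff
end
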